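/- Let T be a string of length n with unique minimal sentinel at position n, λ its Lyndon array, and ISA its inverse suffix array. Then for all i < n: λ[i] = 1 if and only if ISA[i+1] < ISA[i], i.e., position i ends a maximal Lyndon word of length 1 exactly when the suffix at position i+1 is lexicographically smaller than the suffix at position i. -/

import Mathlib

/-!
Write `S i` for the suffix of `T` at `i`. If a Lyndon word `a :: v` with `v ≠ []` starts at `i`,
then `a :: v < v ++ [a]`, and `v` is not a prefix of `a :: v` (that would force `a :: v` to be
the trivial rotation `v ++ [a]`), so the comparison of `a :: v` with `v` is decided inside the
word and `S i < S (i + 1)`. Conversely, if `S i < S (i + 1)`, let `j > i` be the first position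
with `S j < S i`, which exists because of the sentinel. Then `T[i..j)` is a Lyndon word of length
at least `2`: each proper suffix `v` of it has `S i < v ++ S j`, and by minimality of `j` the
word `v` cannot be a prefix of `T[i..j)`. Suffixes at distinct positions are distinct, so one of
`S i < S (i + 1)` and `S (i + 1) < S i` holds.
-/

/-- A nonempty string is a Lyndon word if it is lexicographically strictly smaller
than all of its proper rotations: for every factorization `w = u ++ v` with `u, v`
nonempty, `w < v ++ u`. -/
def IsLyndon {α : Type*} [LinearOrder α] (w : List α) : Prop :=
  w ≠ [] ∧ ∀ u v : List α, w = u ++ v → u ≠ [] → v ≠ [] → w < v ++ u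

/-- `lam` is the Lyndon array of `T` (0-indexed): `lam i` is the length of the
longest Lyndon word starting at position `i` of `T`. -/
def IsLyndonArray {α : Type*} [LinearOrder α] (T : List α) (lam : ℕ → ℕ) : Prop :=
  ∀ i < T.length,
    IsLyndon ((T.drop i).take (lam i)) ∧
    ∀ m ≤ T.length - i, IsLyndon ((T.drop i).take m) → m ≤ lam i

namespace List

variable {α : Type*}

theorem lt_of_append_lt_append_left [Preorder α] : ∀ {a x y : List α}, a ++ x < a ++ y → x < y
  | [], _, _, h => h
  | _ :: _, _, _, h =>
    lt_of_append_lt_append_left (cons_lt_cons_iff.mp h |>.resolve_left (lt_irrefl _)).2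

theorem append_lt_append_iff_of_not_prefix [LT α] :
    ∀ {x y : List α}, ¬ x <+: y → ¬ y <+: x → ∀ s t, (x ++ s < y ++ t ↔ x < y)
  | [], _, hxy, _, _, _ => absurd nil_prefix hxy
  | _ :: _, [], _, hyx, _, _ => absurd nil_prefix hyx
  | a :: x, b :: y, hxy, hyx, s, t => by
    simp only [cons_append, cons_lt_cons_iff]
    refine or_congr_right (and_congr_right fun hab => ?_)
    subst hab
    exact append_lt_append_iff_of_not_prefix (fun h => hxy (cons_prefix_cons.mpr ⟨rfl, h⟩))
      (fun h => hyx (cons_prefix_cons.mpr ⟨rfl, h⟩)) s t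

theorem drop_lt_drop_of_getElem_lt [LT α] {l : List α} {a b : ℕ} (ha : a < l.length)
    (hb : b < l.length) (h : l[a] < l[b]) : l.drop a < l.drop b := by
  rw [drop_eq_getElem_cons ha, drop_eq_getElem_cons hb]
  exact cons_lt_cons_iff.mpr (Or.inl h)

end List

section Lyndon

open List

variable {α : Type*} [LinearOrder α]

theorem isLyndon_singleton (a : α) : IsLyndon [a] := by
  refine ⟨cons_ne_nil a [], fun u v huv hu hv => absurd (congrArg length huv) ?_⟩
  simp only [length_singleton, length_append]
  have := length_pos_iff.mpr hu
  have := length_pos_iff.mpr hv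
  omega

theorem IsLyndon.append_lt_tail_append {w : List α} (hw : IsLyndon w) (hlen : 1 < w.length)
    (r : List α) : w ++ r < w.tail ++ r := by
  obtain _ | ⟨a, v⟩ := w
  · simp at hlen
  have hv : v ≠ [] := ne_nil_of_length_pos (by simpa using hlen)
  have hrot : a :: v < v ++ [a] := hw.2 [a] v rfl (cons_ne_nil a []) hv
  have hvw : ¬ v <+: a :: v := by
    rintro ⟨c, hc⟩
    obtain ⟨c, rfl⟩ : ∃ c', c = [c'] := length_eq_one_iff.mp (by simpa using congrArg length hc)
    -- `v ++ [c] = a :: v` is a permutation of `v ++ [a]`, so `c = a`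
    have hca : c = a := singleton_perm_singleton.mp <| (perm_append_left_iff v).mp <|
      hc ▸ (perm_append_singleton a v).symm
    exact lt_irrefl _ (hca ▸ hc ▸ hrot)
  have hwv : ¬ a :: v <+: v := fun h => by simpa using h.length_le
  rw [tail_cons, append_lt_append_iff_of_not_prefix hwv hvw,
    ← append_lt_append_iff_of_not_prefix hwv hvw [] [a], append_nil]
  exact hrot

theorem isLyndon_take_of_lt_drop {L : List α} {j : ℕ} (hj : 0 < j) (hlt : L.drop j < L)
    (hmin : ∀ k, 0 < k → k < j → L < L.drop k) : IsLyndon (L.take j) := by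
  set R := L.drop j
  have hL : L = L.take j ++ R := (take_append_drop j L).symm
  refine ⟨fun h => ?_, fun u v huv hu hv => ?_⟩
  · rw [take_eq_nil_iff] at h
    rcases h with h | rfl
    · omega
    · simp [R] at hlt
  have hlen : u.length + v.length ≤ j := by
    simpa [huv] using (congrArg length huv).symm.le.trans (length_take_le j L)
  have hu := length_pos_iff.mpr hu
  have hv := length_pos_iff.mpr hv
  rw [huv, append_assoc] at hL
  have hLv : L < v ++ R := by
    simpa [hL] using hmin u.length hu (by omega)
  have hvuv : ¬ v <+: u ++ v := by
    rintro ⟨r, hr⟩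
    rw [← append_assoc, ← hr, append_assoc] at hL
    have hrR : r ++ R < R := lt_of_append_lt_append_left (hL ▸ hLv)
    have hLr : L < r ++ R := by
      simpa [hL] using hmin v.length hv (by omega)
    exact lt_irrefl L (hLr.trans (hrR.trans hlt))
  have huvv : ¬ u ++ v <+: v := fun h => by
    have := h.length_le
    simp only [length_append] at this
    omega
  rw [huv, ← append_nil (u ++ v), append_lt_append_iff_of_not_prefix huvv hvuv,
    ← append_lt_append_iff_of_not_prefix huvv hvuv R R, append_assoc, ← hL]
  exact hLv

theorem exists_isLyndon_prefix_of_lt_tail {L : List α} (hL : ∃ k, 0 < k ∧ L.drop k < L)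
    (htail : L < L.tail) : ∃ w, IsLyndon w ∧ w <+: L ∧ 1 < w.length := by
  classical
  have hL0 : L ≠ [] := by rintro rfl; exact lt_irrefl _ htail
  have hL1 : 1 < L.length := by
    by_contra h
    have : L.tail = [] := by rw [← length_eq_zero_iff, length_tail]; omega
    simp [this] at htail
  obtain ⟨hj, hjlt⟩ := Nat.find_spec hL
  have hmin : ∀ k, 0 < k → k < Nat.find hL → L < L.drop k := fun k hk hkj => by
    have hne : L.drop k ≠ L := fun h => by
      have := congrArg length h
      rw [length_drop] at this
      have := length_pos_iff.mpr hL0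
      omega
    exact lt_of_le_of_ne (not_lt.mp fun h => Nat.find_min hL hkj ⟨hk, h⟩) hne.symm
  have hj2 : 1 < Nat.find hL := by
    by_contra h
    have h1 : Nat.find hL = 1 := by omega
    rw [h1, drop_one] at hjlt
    exact lt_asymm hjlt htail
  refine ⟨L.take (Nat.find hL), isLyndon_take_of_lt_drop hj hjlt hmin, take_prefix _ _, ?_⟩
  rw [length_take]
  omega

theorem lt_tail_iff_exists_isLyndon_prefix {L : List α} (hL : ∃ k, 0 < k ∧ L.drop k < L) :
    L < L.tail ↔ ∃ w, IsLyndon w ∧ w <+: L ∧ 1 < w.length := by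
  refine ⟨exists_isLyndon_prefix_of_lt_tail hL, ?_⟩
  rintro ⟨w, hw, ⟨r, rfl⟩, hlen⟩
  rw [tail_append_of_ne_nil hw.1]
  exact hw.append_lt_tail_append hlen r

namespace IsLyndonArray

variable {T : List α} {lam : ℕ → ℕ} {i : ℕ}

theorem pos (hlam : IsLyndonArray T lam) (hi : i < T.length) : 0 < lam i := by
  refine (hlam i hi).2 1 (by omega) ?_
  rw [drop_eq_getElem_cons hi]
  exact isLyndon_singleton _

theorem lt_iff_exists_isLyndon_prefix (hlam : IsLyndonArray T lam) {m : ℕ}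
    (hm : m < T.length - i) : m < lam i ↔ ∃ w, IsLyndon w ∧ w <+: T.drop i ∧ m < w.length := by
  have hi : i < T.length := by omega
  constructor
  · intro h
    refine ⟨_, (hlam i hi).1, take_prefix _ _, ?_⟩
    rw [length_take, length_drop]
    omega
  · rintro ⟨w, hw, hpre, hlen⟩
    have hwlen : w.length ≤ T.length - i := length_drop (l := T) ▸ hpre.length_le
    rw [prefix_iff_eq_take.mp hpre] at hw
    exact hlen.trans_le ((hlam i hi).2 _ hwlen hw)

end IsLyndonArray

end Lyndon

theorem lyndonArray_one_iff_isa_decreasing_general {α : Type*} [LinearOrder α] [Inhabited α]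
    (T : List α) (n : ℕ) (hn : T.length = n)
    (hsent : ∀ k, k + 1 < n → T[n - 1]! < T[k]!)
    (ISA : ℕ → ℕ)
    (hISA : ∀ i < n, ∀ j < n, (ISA i < ISA j ↔ T.drop i < T.drop j))
    (lam : ℕ → ℕ) (hlam : IsLyndonArray T lam) :
    ∀ i, i + 1 < n → (lam i = 1 ↔ ISA (i + 1) < ISA i) := by
  subst hn
  intro i hi
  have hL : ∃ k, 0 < k ∧ (T.drop i).drop k < T.drop i := by
    refine ⟨T.length - 1 - i, by omega, ?_⟩
    rw [List.drop_drop, show i + (T.length - 1 - i) = T.length - 1 by omega]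
    have h := hsent i hi
    rw [getElem!_pos T _ (by omega), getElem!_pos T _ (by omega)] at h
    exact List.drop_lt_drop_of_getElem_lt _ _ h
  have key : T.drop i < T.drop (i + 1) ↔ 1 < lam i := by
    rw [← List.tail_drop, lt_tail_iff_exists_isLyndon_prefix hL,
      hlam.lt_iff_exists_isLyndon_prefix (by omega)]
  have hne : T.drop (i + 1) ≠ T.drop i := fun h => by
    have := congrArg List.length h
    simp only [List.length_drop] at this
    omega
  have hlam_pos := hlam.pos (i := i) (by omega)
  rw [hISA (i + 1) hi i (by omega)]
  constructor
  · intro h1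
    exact lt_of_le_of_ne (not_lt.mp (mt key.mp (by omega))) hne
  · intro h
    by_contra h1
    exact lt_asymm h (key.mpr (by omega))

/-- `λ[i] = 1` iff the suffix at `i+1` is lexicographically smaller than the
suffix at `i`, i.e. iff `ISA[i+1] < ISA[i]`. (0-indexed.) -/
theorem lyndonArray_one_iff_isa_decreasing {α : Type*} [LinearOrder α] [Inhabited α]
    (T : List α) (n : ℕ) (hn : T.length = n) (hpos : 0 < n)
    (hsent : ∀ k, k + 1 < n → T[n - 1]! < T[k]!)
    (ISA : ℕ → ℕ)
    (hISA : ∀ i < n, ∀ j < n, (ISA i < ISA j ↔ T.drop i < T.drop j))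
    (lam : ℕ → ℕ) (hlam : IsLyndonArray T lam) :
    ∀ i, i + 1 < n → (lam i = 1 ↔ ISA (i + 1) < ISA i) :=
  lyndonArray_one_iff_isa_decreasing_general T n hn hsent ISA hISA lam hlam
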